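/- Let γ : [a, b] → ℝ be continuous with γ(a) ≤ 0, let δ > 0, let N be a natural number, and assume γ(b) ≥ N·δ. Then there exist real numbers a ≤ s₁ ≤ t₁ ≤ s₂ ≤ t₂ ≤ … ≤ s_N ≤ t_N ≤ b such that for each k = 1, …, N one has γ(s_k) = (k−1)·δ, γ(t_k) = k·δ, and γ(τ) ∈ [(k−1)·δ, k·δ] for every τ ∈ [s_k, t_k]. -/
import Mathlib


/-- Abstract crossing statement underlying Lemma 3 (EnergyDepthEstimateForDiscs):
a continuous path `γ` on `[a, b]` starting at a nonpositive value and ending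
above `N·δ` successively traverses the `N` slabs `[(k-1)δ, kδ]`. -/
theorem stmt_5 (a b : ℝ) (hab : a ≤ b) (γ : ℝ → ℝ)
    (hγ : ContinuousOn γ (Set.Icc a b))
    (ha : γ a ≤ 0) (δ : ℝ) (hδ : 0 < δ) (N : ℕ) (hb : γ b ≥ N * δ) :
    ∃ s t : ℕ → ℝ,
      (∀ k, 1 ≤ k → k ≤ N → a ≤ s k ∧ s k ≤ t k ∧ t k ≤ b) ∧
      (∀ k, 1 ≤ k → k < N → t k ≤ s (k + 1)) ∧
      (∀ k, 1 ≤ k → k ≤ N →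
        γ (s k) = ((k : ℝ) - 1) * δ ∧ γ (t k) = (k : ℝ) * δ ∧
        ∀ τ ∈ Set.Icc (s k) (t k),
          γ τ ∈ Set.Icc (((k : ℝ) - 1) * δ) ((k : ℝ) * δ)) := by
  classical
  set T : ℕ → Set ℝ := fun k => Set.Icc a b ∩ γ ⁻¹' {(k : ℝ) * δ} with hTdef
  have hTclosed : ∀ k, IsClosed (T k) :=
    fun k => hγ.preimage_isClosed_of_isClosed isClosed_Icc isClosed_singleton
  have hTne : ∀ k : ℕ, 1 ≤ k → k ≤ N → (T k).Nonempty := by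
    intro k hk1 hkN
    have h1 : (k : ℝ) * δ ∈ Set.Icc (γ a) (γ b) := by
      constructor
      · have : (0:ℝ) ≤ (k:ℝ) * δ := by positivity
        linarith
      · have : (k : ℝ) ≤ N := by exact_mod_cast hkN
        nlinarith
    obtain ⟨x, hx, hxe⟩ := intermediate_value_Icc hab hγ h1
    exact ⟨x, hx, by simpa using hxe⟩
  set t : ℕ → ℝ := fun k => sInf (T k) with htdef
  have hTbdd : ∀ k, BddBelow (T k) := fun k => ⟨a, fun x hx => hx.1.1⟩
  have htmem : ∀ k : ℕ, 1 ≤ k → k ≤ N → t k ∈ T k := fun k hk1 hkN =>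
    (hTclosed k).csInf_mem (hTne k hk1 hkN) (hTbdd k)
  have htmin : ∀ k : ℕ, ∀ x ∈ T k, t k ≤ x := fun k x hx => csInf_le (hTbdd k) hx
  set S : ℕ → Set ℝ := fun k => Set.Icc a (t k) ∩ γ ⁻¹' {((k : ℝ) - 1) * δ} with hSdef
  have hγ' : ∀ k : ℕ, 1 ≤ k → k ≤ N → ContinuousOn γ (Set.Icc a (t k)) := by
    intro k hk1 hkN
    exact hγ.mono (Set.Icc_subset_Icc le_rfl (htmem k hk1 hkN).1.2)
  have hSne : ∀ k : ℕ, 1 ≤ k → k ≤ N → (S k).Nonempty := by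
    intro k hk1 hkN
    have hat : a ≤ t k := (htmem k hk1 hkN).1.1
    have hγt : γ (t k) = (k : ℝ) * δ := (htmem k hk1 hkN).2
    have h1 : ((k : ℝ) - 1) * δ ∈ Set.Icc (γ a) (γ (t k)) := by
      have hk1' : (1:ℝ) ≤ (k:ℝ) := by exact_mod_cast hk1
      constructor
      · nlinarith
      · rw [hγt]; nlinarith
    obtain ⟨x, hx, hxe⟩ := intermediate_value_Icc hat (hγ' k hk1 hkN) h1
    exact ⟨x, hx, by simpa using hxe⟩
  have hSclosed : ∀ k : ℕ, 1 ≤ k → k ≤ N → IsClosed (S k) := fun k hk1 hkN =>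
    (hγ' k hk1 hkN).preimage_isClosed_of_isClosed isClosed_Icc isClosed_singleton
  set s : ℕ → ℝ := fun k => sSup (S k) with hsdef
  have hSbdd : ∀ k, BddAbove (S k) := fun k => ⟨t k, fun x hx => hx.1.2⟩
  have hsmem : ∀ k : ℕ, 1 ≤ k → k ≤ N → s k ∈ S k := fun k hk1 hkN =>
    (hSclosed k hk1 hkN).csSup_mem (hSne k hk1 hkN) (hSbdd k)
  have hsmax : ∀ k : ℕ, ∀ x ∈ S k, x ≤ s k := fun k x hx => le_csSup (hSbdd k) hx
  refine ⟨s, t, ?_, ?_, ?_⟩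
  · intro k hk1 hkN
    exact ⟨(hsmem k hk1 hkN).1.1, (hsmem k hk1 hkN).1.2, (htmem k hk1 hkN).1.2⟩
  · -- t k ≤ s (k+1)
    intro k hk1 hkN
    have hk1' : 1 ≤ k + 1 := by omega
    have hkN' : k + 1 ≤ N := by omega
    have hmem' := htmem (k + 1) hk1' hkN'
    have hat : a ≤ t (k + 1) := hmem'.1.1
    -- t k ≤ t (k+1)
    have h1 : (k : ℝ) * δ ∈ Set.Icc (γ a) (γ (t (k + 1))) := by
      have hγt : γ (t (k + 1)) = ((k : ℕ) + 1 : ℕ) * δ := hmem'.2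
      constructor
      · have : (0:ℝ) ≤ (k:ℝ) * δ := by positivity
        linarith
      · rw [hγt]; push_cast; nlinarith
    obtain ⟨x, hx, hxe⟩ := intermediate_value_Icc hat (hγ' (k + 1) hk1' hkN') h1
    have hxT : x ∈ T k := ⟨⟨hx.1, le_trans hx.2 hmem'.1.2⟩, by simpa using hxe⟩
    have htt : t k ≤ t (k + 1) := le_trans (htmin k x hxT) hx.2
    have : t k ∈ S (k + 1) := by
      refine ⟨⟨(htmem k hk1 (le_of_lt hkN)).1.1, htt⟩, ?_⟩
      have := (htmem k hk1 (le_of_lt hkN)).2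
      simp only [Set.mem_preimage, Set.mem_singleton_iff]
      push_cast
      simpa using this
    exact hsmax (k + 1) _ this
  · intro k hk1 hkN
    have hsm := hsmem k hk1 hkN
    have htm := htmem k hk1 hkN
    refine ⟨hsm.2, htm.2, ?_⟩
    intro τ hτ
    have haτ : a ≤ τ := le_trans hsm.1.1 hτ.1
    have hτb : τ ≤ b := le_trans hτ.2 htm.1.2
    constructor
    · -- lower bound
      by_contra hlt
      push_neg at hlt
      have h1 : ((k : ℝ) - 1) * δ ∈ Set.Icc (γ τ) (γ (t k)) := by
        have hk1' : (1:ℝ) ≤ (k:ℝ) := by exact_mod_cast hk1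
        refine ⟨le_of_lt hlt, ?_⟩
        rw [htm.2]; nlinarith
      have hcont : ContinuousOn γ (Set.Icc τ (t k)) :=
        hγ.mono (Set.Icc_subset_Icc haτ htm.1.2)
      obtain ⟨x, hx, hxe⟩ := intermediate_value_Icc hτ.2 hcont h1
      have hxS : x ∈ S k := ⟨⟨le_trans haτ hx.1, hx.2⟩, by simpa using hxe⟩
      have : τ ≤ x := hx.1
      have : τ = x := le_antisymm this (le_trans (hsmax k x hxS) hτ.1)
      rw [this, hxe] at hlt
      exact absurd hlt (lt_irrefl _)
    · -- upper bound
      by_contra hgt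
      push_neg at hgt
      have h1 : (k : ℝ) * δ ∈ Set.Icc (γ a) (γ τ) := by
        refine ⟨?_, le_of_lt hgt⟩
        have : (0:ℝ) ≤ (k:ℝ) * δ := by positivity
        linarith
      have hcont : ContinuousOn γ (Set.Icc a τ) :=
        hγ.mono (Set.Icc_subset_Icc le_rfl hτb)
      obtain ⟨x, hx, hxe⟩ := intermediate_value_Icc haτ hcont h1
      have hxT : x ∈ T k := ⟨⟨hx.1, le_trans hx.2 hτb⟩, by simpa using hxe⟩
      have : x = τ := le_antisymm hx.2 (le_trans hτ.2 (htmin k x hxT))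
      rw [this, ] at hxe
      rw [hxe] at hgt
      exact absurd hgt (lt_irrefl _)
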